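/- Let X be a continuum (a compact connected metric space with more than one point), let n ≥ 2 be an integer, and let f : X → X be a continuous map. Then f is multi-sensitive if and only if F_n(f) is multi-sensitive; moreover, if SF_n(f) is multi-sensitive, then F_n(f) is multi-sensitive. -/

import Mathlib

open Metric Set TopologicalSpace

variable (X : Type*) [MetricSpace X] (n : ℕ)

/-- The `n`-fold symmetric product `F_n(X)`: nonempty subsets of `X` with at most `n`
points, as a subspace of the nonempty compact subsets of `X` with the Hausdorff metric. -/
abbrev Fn := {A : NonemptyCompacts X // (A : Set X).Finite ∧ (A : Set X).ncard ≤ n}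

/-- The induced map `F_n(f)` on the `n`-fold symmetric product, `A ↦ f(A)`. -/
noncomputable def FnMap (f : X → X) : Fn X n → Fn X n := fun A =>
  ⟨⟨⟨f '' (A.1 : Set X), (A.2.1.image f).isCompact⟩, A.1.nonempty.image f⟩,
    A.2.1.image f, le_trans (Set.ncard_image_le A.2.1) A.2.2⟩

/-- `F_1(X) ⊆ F_n(X)`: the set of singletons. -/
def F1 : Set (Fn X n) := {A | ∃ x : X, (A.1 : Set X) = {x}}

/-- The setoid collapsing `F_1(X)` to a point. -/
def SFnSetoid : Setoid (Fn X n) where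
  r A B := A = B ∨ (A ∈ F1 X n ∧ B ∈ F1 X n)
  iseqv := by
    refine ⟨fun _ => Or.inl rfl, fun h => h.imp Eq.symm And.symm, fun h₁ h₂ => ?_⟩
    rcases h₁ with rfl | h₁
    · exact h₂
    · rcases h₂ with rfl | h₂
      · exact Or.inr h₁
      · exact Or.inr ⟨h₁.1, h₂.2⟩

/-- The `n`-fold symmetric product suspension `SF_n(X) = F_n(X)/F_1(X)`,
with the quotient topology. -/
abbrev SFn := Quotient (SFnSetoid X n)

/-- The quotient map `q : F_n(X) → SF_n(X)`. -/
def SFnQ : Fn X n → SFn X n := Quotient.mk (SFnSetoid X n)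

/-- The induced map `SF_n(f)` on the suspension, with `SF_n(f) ∘ q = q ∘ F_n(f)`. -/
noncomputable def SFnMap (f : X → X) : SFn X n → SFn X n :=
  Quotient.lift (fun A => SFnQ X n (FnMap X n f A))
    (fun A B h => Quotient.sound (by
      rcases h with rfl | ⟨⟨x, hx⟩, ⟨y, hy⟩⟩
      · exact Or.inl rfl
      · exact Or.inr ⟨⟨f x, by simp [FnMap, hx]⟩, ⟨f y, by simp [FnMap, hy]⟩⟩))

/-- The metric `ρ` on `SF_n(X)`:
`ρ(χ₁,χ₂) = H(F_1(X) ∪ q⁻¹(χ₁), F_1(X) ∪ q⁻¹(χ₂))` where `H` is the Hausdorff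
distance between subsets of `F_n(X)`. -/
noncomputable def SFnDist : SFn X n → SFn X n → ℝ := fun a b =>
  Metric.hausdorffDist (F1 X n ∪ SFnQ X n ⁻¹' {a}) (F1 X n ∪ SFnQ X n ⁻¹' {b})

/-- `g` is multi-sensitive (w.r.t. a distance function `d` and the topology of `Z`). -/
def MultiSensitive {Z : Type*} [TopologicalSpace Z] (d : Z → Z → ℝ) (g : Z → Z) : Prop :=
  ∃ δ : ℝ, 0 < δ ∧ ∀ m : ℕ, 0 < m → ∀ U : Fin m → Set Z,
    (∀ i, IsOpen (U i)) → (∀ i, (U i).Nonempty) →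
    ∃ k : ℕ, 0 < k ∧ ∀ i, ∃ x ∈ U i, ∃ y ∈ U i, δ < d (g^[k] x) (g^[k] y)

/-!
`F_n(f)` sees the dynamics of `f` pointwise: a small Hausdorff ball around `A ∈ F_n(X)`
contains all sets obtained by moving each point of `A` slightly. If `f` is multi-sensitive
with constant `δ`, one time `k` separates two nearby points `x_a, y_a` around every point
`a` of every chosen `A` at once. Fixing `a₀ ∈ A` and `p = fᵏ(x_{a₀})`, the triangle inequality
lets us pick for each `a` one of `x_a, y_a` whose image is `δ/2`-far from `p`; the set of these
choices and the same set with `x_{a₀}` restored have images at Hausdorff distance `> δ/2`.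
Conversely, balls around singletons consist of sets of points near one point, and two
`δ`-far sets contain `δ`-far points. Finally, `q : F_n(X) → SF_n(X)` does not increase
distances, and, since singletons of a perfect space are limits of pairs, every nonempty
open set of `F_n(X)` contains an open set disjoint from `F_1(X)`, which `q` maps to an open set.
-/

section MultiSensitivity

variable {Z : Type*} [TopologicalSpace Z]

-- `MultiSensitive d g` unfolds to `∃ δ, 0 < δ ∧ MultiSensitiveWith d g δ`.
def MultiSensitiveWith (d : Z → Z → ℝ) (g : Z → Z) (δ : ℝ) : Prop :=
  ∀ m : ℕ, 0 < m → ∀ U : Fin m → Set Z, (∀ i, IsOpen (U i)) → (∀ i, (U i).Nonempty) →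
    ∃ k : ℕ, 0 < k ∧ ∀ i, ∃ x ∈ U i, ∃ y ∈ U i, δ < d (g^[k] x) (g^[k] y)

theorem MultiSensitiveWith.exists_iterate_of_finite {d : Z → Z → ℝ} {g : Z → Z} {δ : ℝ}
    (h : MultiSensitiveWith d g δ) {ι : Type*} [Finite ι] [Nonempty ι] (U : ι → Set Z)
    (hUo : ∀ i, IsOpen (U i)) (hUne : ∀ i, (U i).Nonempty) :
    ∃ k : ℕ, 0 < k ∧ ∀ i, ∃ x ∈ U i, ∃ y ∈ U i, δ < d (g^[k] x) (g^[k] y) := by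
  obtain ⟨m, ⟨e⟩⟩ := Finite.exists_equiv_fin ι
  have hm : 0 < m := by
    rw [← Fintype.card_fin m, Fintype.card_pos_iff]
    exact e.symm.nonempty
  obtain ⟨k, hk, H⟩ := h m hm (U ∘ e.symm) (fun i => hUo _) (fun i => hUne _)
  exact ⟨k, hk, fun i => by simpa using H (e i)⟩

end MultiSensitivity

theorem hausdorffDist_insert_insert_le {α : Type*} [PseudoMetricSpace α] (s : Set α) (x y : α) :
    hausdorffDist (insert x s) (insert y s) ≤ dist x y := by
  refine hausdorffDist_le_of_mem_dist dist_nonneg ?_ ?_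
  · rintro z (rfl | hz)
    exacts [⟨y, mem_insert _ _, le_rfl⟩, ⟨z, mem_insert_of_mem _ hz, by simp⟩]
  · rintro z (rfl | hz)
    exacts [⟨x, mem_insert _ _, (dist_comm _ _).le⟩, ⟨z, mem_insert_of_mem _ hz, by simp⟩]

section SymmetricProduct

variable {X n}

namespace Fn

theorem dist_def (A B : Fn X n) : dist A B = hausdorffDist (A.1 : Set X) B.1 := rfl

theorem ext {A B : Fn X n} (h : (A.1 : Set X) = B.1) : A = B :=
  Subtype.ext (NonemptyCompacts.ext h)

def ofFinite (s : Set X) (hs : s.Finite) (hne : s.Nonempty) (hcard : s.ncard ≤ n) : Fn X n :=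
  ⟨⟨⟨s, hs.isCompact⟩, hne⟩, hs, hcard⟩

@[simp] theorem coe_ofFinite (s : Set X) (hs : s.Finite) (hne : s.Nonempty)
    (hcard : s.ncard ≤ n) : ((ofFinite s hs hne hcard).1 : Set X) = s := rfl

theorem infDist_le_dist {a : X} {A : Fn X n} (ha : a ∈ (A.1 : Set X)) (B : Fn X n) :
    infDist a B.1 ≤ dist A B :=
  infDist_le_hausdorffDist_of_mem ha (edist_ne_top A.1 B.1)

theorem dist_le_dist_of_coe_eq_singleton {a x : X} {A B : Fn X n} (ha : a ∈ (A.1 : Set X))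
    (hB : (B.1 : Set X) = {x}) : dist a x ≤ dist A B := by
  simpa [hB] using infDist_le_dist ha B

theorem lt_dist_of_mem {p : X} {r : ℝ} {A B : Fn X n} (hp : p ∈ (A.1 : Set X))
    (hfar : ∀ q ∈ (B.1 : Set X), r < dist p q) : r < dist A B := by
  obtain ⟨q, hq, hpq⟩ := B.1.isCompact.exists_infDist_eq_dist B.1.nonempty p
  exact (hfar q hq).trans_le (hpq ▸ infDist_le_dist hp B)

theorem exists_lt_dist_of_lt_dist {r : ℝ} {A B : Fn X n} (h : r < dist A B) :
    ∃ a ∈ (A.1 : Set X), ∃ b ∈ (B.1 : Set X), r < dist a b := by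
  by_contra! hle
  obtain ⟨a, ha⟩ := A.1.nonempty
  obtain ⟨b, hb⟩ := B.1.nonempty
  refine h.not_ge (hausdorffDist_le_of_mem_dist (dist_nonneg.trans (hle a ha b hb)) ?_ ?_)
  · exact fun a ha => ⟨b, hb, hle a ha b hb⟩
  · exact fun b hb => ⟨a, ha, by rw [dist_comm]; exact hle a ha b hb⟩

end Fn

@[simp] theorem coe_FnMap (f : X → X) (A : Fn X n) :
    ((FnMap X n f A).1 : Set X) = f '' A.1 := rfl

theorem FnMap_iterate (f : X → X) (k : ℕ) : (FnMap X n f)^[k] = FnMap X n f^[k] := by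
  induction k with
  | zero => exact funext fun A => Fn.ext (image_id _).symm
  | succ k ih =>
    rw [Function.iterate_succ', ih, Function.iterate_succ']
    exact funext fun A => Fn.ext (image_comp _ _ _).symm

theorem dist_FnMap_le {g : X → X} {A : Fn X n} {r : ℝ}
    (hg : ∀ a ∈ (A.1 : Set X), dist (g a) a ≤ r) : dist (FnMap X n g A) A ≤ r := by
  obtain ⟨a₀, ha₀⟩ := A.1.nonempty
  refine hausdorffDist_le_of_mem_dist (dist_nonneg.trans (hg a₀ ha₀)) ?_ ?_
  · rintro _ ⟨a, ha, rfl⟩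
    exact ⟨a, ha, hg a ha⟩
  · exact fun a ha => ⟨g a, mem_image_of_mem g ha, by rw [dist_comm]; exact hg a ha⟩

theorem exists_half_lt_dist_FnMap (A : Fn X n) {g x y : X → X} {δ : ℝ}
    (hsep : ∀ a ∈ (A.1 : Set X), δ < dist (g (x a)) (g (y a))) :
    ∃ c c' : X → X, (∀ a, c a = x a ∨ c a = y a) ∧ (∀ a, c' a = x a ∨ c' a = y a) ∧
      δ / 2 < dist (FnMap X n g (FnMap X n c A)) (FnMap X n g (FnMap X n c' A)) := by
  classical
  obtain ⟨a₀, ha₀⟩ := A.1.nonempty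
  set p := g (x a₀)
  set c : X → X := fun a => if δ / 2 < dist (g (y a)) p then y a else x a with hc
  have hc_choice : ∀ a, c a = x a ∨ c a = y a := by
    intro a
    simp only [hc]
    split_ifs <;> simp
  have hc_far : ∀ a ∈ (A.1 : Set X), δ / 2 < dist p (g (c a)) := by
    intro a ha
    rw [dist_comm]
    simp only [hc]
    split_ifs with hy
    · exact hy
    · have := hsep a ha
      have := dist_triangle (g (x a)) p (g (y a))
      rw [dist_comm p] at this
      linarith
  refine ⟨Function.update c a₀ (x a₀), c, fun a => ?_, hc_choice, ?_⟩
  · rcases eq_or_ne a a₀ with rfl | h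
    · simp
    · simpa [h] using hc_choice a
  · refine Fn.lt_dist_of_mem (p := p) ⟨_, ⟨a₀, ha₀, rfl⟩, by simp [p]⟩ ?_
    rintro _ ⟨_, ⟨a, ha, rfl⟩, rfl⟩
    exact hc_far a ha

variable {f : X → X}

theorem MultiSensitive.fnMap (h : MultiSensitive dist f) : MultiSensitive dist (FnMap X n f) := by
  obtain ⟨δ, hδ, H⟩ := h
  refine ⟨δ / 2, half_pos hδ, fun m hm U hUo hUne => ?_⟩
  have hball : ∀ i, ∃ A, ∃ ε > 0, ball A ε ⊆ U i := fun i =>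
    let ⟨A, hA⟩ := hUne i
    ⟨A, Metric.isOpen_iff.1 (hUo i) A hA⟩
  choose A ε hε hAU using hball
  have : ∀ i, Finite (A i).1 := fun i => (A i).2.1.to_subtype
  have : Nonempty ((i : Fin m) × (A i).1) := ⟨⟨⟨0, hm⟩, (A _).1.nonempty.to_subtype.some⟩⟩
  obtain ⟨k, hk, hsep⟩ := MultiSensitiveWith.exists_iterate_of_finite H
    (fun a : (i : Fin m) × (A i).1 => ball (a.2 : X) (ε a.1 / 2)) (fun _ => isOpen_ball)
    (fun a => ⟨a.2, mem_ball_self (half_pos (hε a.1))⟩)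
  refine ⟨k, hk, fun i => ?_⟩
  have : ∀ a ∈ ((A i).1 : Set X), ∃ x ∈ ball a (ε i / 2), ∃ y ∈ ball a (ε i / 2),
      δ < dist (f^[k] x) (f^[k] y) := fun a ha => hsep ⟨i, a, ha⟩
  choose! x hx y hy hxy using this
  obtain ⟨c, c', hc, hc', hcc'⟩ := exists_half_lt_dist_FnMap (A i) hxy
  have hnear : ∀ c : X → X, (∀ a, c a = x a ∨ c a = y a) → FnMap X n c (A i) ∈ U i := by
    refine fun c hc => hAU i (mem_ball.2 ((dist_FnMap_le fun a ha => ?_).trans_lt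
      (half_lt_self (hε i))))
    rcases hc a with h | h <;> rw [h]
    exacts [(mem_ball.1 (hx a ha)).le, (mem_ball.1 (hy a ha)).le]
  exact ⟨_, hnear c hc, _, hnear c' hc', by rwa [FnMap_iterate]⟩

theorem MultiSensitive.of_fnMap (hn : 1 ≤ n) (h : MultiSensitive dist (FnMap X n f)) :
    MultiSensitive dist f := by
  obtain ⟨δ, hδ, H⟩ := h
  refine ⟨δ, hδ, fun m hm U hUo hUne => ?_⟩
  have hball : ∀ i, ∃ x, ∃ r > 0, ball x r ⊆ U i := fun i =>
    let ⟨x, hx⟩ := hUne i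
    ⟨x, Metric.isOpen_iff.1 (hUo i) x hx⟩
  choose x r hr hxU using hball
  let single (i : Fin m) : Fn X n :=
    Fn.ofFinite {x i} (finite_singleton _) (singleton_nonempty _) (by rwa [ncard_singleton])
  obtain ⟨k, hk, hsep⟩ := H m hm (fun i => ball (single i) (r i)) (fun _ => isOpen_ball)
    (fun i => ⟨_, mem_ball_self (hr i)⟩)
  refine ⟨k, hk, fun i => ?_⟩
  obtain ⟨A, hA, B, hB, hAB⟩ := hsep i
  rw [FnMap_iterate] at hAB
  have hU : ∀ C ∈ ball (single i) (r i), ∀ c ∈ (C.1 : Set X), c ∈ U i := fun C hC c hc =>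
    hxU i ((Fn.dist_le_dist_of_coe_eq_singleton hc rfl).trans_lt hC)
  obtain ⟨_, ⟨a, ha, rfl⟩, _, ⟨b, hb, rfl⟩, hab⟩ := Fn.exists_lt_dist_of_lt_dist hAB
  exact ⟨a, hU A hA a ha, b, hU B hB b hb, hab⟩

theorem isClosed_F1 : IsClosed (F1 X n) := by
  rw [← isOpen_compl_iff, Metric.isOpen_iff]
  intro A hA
  obtain ⟨u, hu, v, hv, huv⟩ : (A.1 : Set X).Nontrivial :=
    A.1.nonempty.exists_eq_singleton_or_nontrivial.resolve_left hA
  refine ⟨dist u v / 2, half_pos (dist_pos.2 huv), ?_⟩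
  rintro B hB ⟨z, hz⟩
  rw [mem_ball'] at hB
  have hu := (Fn.dist_le_dist_of_coe_eq_singleton hu hz).trans_lt hB
  have hv := (Fn.dist_le_dist_of_coe_eq_singleton hv hz).trans_lt hB
  have := dist_triangle_right u v z
  linarith

theorem dense_compl_F1 [PerfectSpace X] (hn : 2 ≤ n) : Dense (F1 X n)ᶜ := by
  rw [Metric.dense_iff]
  intro A r hr
  by_cases hA : A ∈ F1 X n
  · obtain ⟨x, hx⟩ := hA
    obtain ⟨y, hyx, hyr⟩ : ∃ y, y ∈ ({x}ᶜ : Set X) ∩ ball x r :=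
      Filter.nonempty_of_mem (inter_mem_nhdsWithin _ (ball_mem_nhds x hr))
    have hcard : ({x, y} : Set X).ncard ≤ n :=
      (ncard_insert_le _ _).trans (by rwa [ncard_singleton])
    refine ⟨Fn.ofFinite {x, y} (toFinite _) (insert_nonempty _ _) hcard, ?_, ?_⟩
    · rw [mem_ball, Fn.dist_def, hx, Fn.coe_ofFinite]
      refine (hausdorffDist_le_of_mem_dist dist_nonneg ?_ ?_).trans_lt (mem_ball.1 hyr)
      · rintro z (rfl | rfl)
        exacts [⟨z, rfl, by simp⟩, ⟨x, rfl, le_rfl⟩]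
      · rintro z rfl
        exact ⟨z, mem_insert _ _, by simp⟩
    · rintro ⟨z, hz⟩
      rw [Fn.coe_ofFinite] at hz
      have hxz : x = z := hz.subset (mem_insert _ _)
      have hyz : y = z := hz.subset (mem_insert_of_mem _ rfl)
      exact hyx (hyz.trans hxz.symm)
  · exact ⟨A, mem_ball_self hr, hA⟩

theorem F1_union_SFnQ_preimage (C : Fn X n) :
    F1 X n ∪ SFnQ X n ⁻¹' {SFnQ X n C} = insert C (F1 X n) := by
  ext A
  simp only [mem_union, mem_preimage, mem_singleton_iff, mem_insert_iff]
  constructor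
  · rintro (h | h)
    · exact Or.inr h
    · rcases Quotient.exact h with rfl | ⟨h, -⟩
      exacts [Or.inl rfl, Or.inr h]
  · rintro (rfl | h)
    exacts [Or.inr rfl, Or.inl h]

theorem SFnDist_SFnQ_le (A B : Fn X n) : SFnDist X n (SFnQ X n A) (SFnQ X n B) ≤ dist A B := by
  simp only [SFnDist, F1_union_SFnQ_preimage]
  exact hausdorffDist_insert_insert_le _ _ _

theorem SFnQ_preimage_image {W : Set (Fn X n)} (hW : Disjoint W (F1 X n)) :
    SFnQ X n ⁻¹' (SFnQ X n '' W) = W := by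
  refine Subset.antisymm ?_ (subset_preimage_image _ _)
  rintro A ⟨B, hB, hBA⟩
  rcases Quotient.exact hBA with rfl | ⟨hB1, -⟩
  exacts [hB, absurd hB1 (hW.notMem_of_mem_left hB)]

theorem isOpen_SFnQ_image {W : Set (Fn X n)} (hWo : IsOpen W) (hW : Disjoint W (F1 X n)) :
    IsOpen (SFnQ X n '' W) := by
  show IsOpen (SFnQ X n ⁻¹' (SFnQ X n '' W))
  rwa [SFnQ_preimage_image hW]

theorem SFnMap_iterate_SFnQ (f : X → X) (k : ℕ) (A : Fn X n) :
    (SFnMap X n f)^[k] (SFnQ X n A) = SFnQ X n ((FnMap X n f)^[k] A) := by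
  induction k with
  | zero => rfl
  | succ k ih =>
    rw [Function.iterate_succ_apply', Function.iterate_succ_apply', ih]
    rfl

theorem MultiSensitive.fnMap_of_sfnMap [PerfectSpace X] (hn : 2 ≤ n)
    (h : MultiSensitive (SFnDist X n) (SFnMap X n f)) : MultiSensitive dist (FnMap X n f) := by
  obtain ⟨δ, hδ, H⟩ := h
  refine ⟨δ, hδ, fun m hm U hUo hUne => ?_⟩
  obtain ⟨k, hk, hsep⟩ := H m hm (fun i => SFnQ X n '' (U i \ F1 X n))
    (fun i => isOpen_SFnQ_image ((hUo i).sdiff isClosed_F1) disjoint_sdiff_left)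
    (fun i => ((dense_compl_F1 hn).inter_open_nonempty _ (hUo i) (hUne i)).image _)
  refine ⟨k, hk, fun i => ?_⟩
  obtain ⟨_, ⟨A, hA, rfl⟩, _, ⟨B, hB, rfl⟩, hAB⟩ := hsep i
  rw [SFnMap_iterate_SFnQ, SFnMap_iterate_SFnQ] at hAB
  exact ⟨A, hA.1, B, hB.1, hAB.trans_le (SFnDist_SFnQ_le _ _)⟩

end SymmetricProduct

theorem stmt2_general (X : Type*) [MetricSpace X] [ConnectedSpace X] [Nontrivial X]
    (n : ℕ) (hn : 2 ≤ n) (f : X → X) :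
    (MultiSensitive (dist : X → X → ℝ) f ↔ MultiSensitive dist (FnMap X n f)) ∧
    (MultiSensitive (SFnDist X n) (SFnMap X n f) → MultiSensitive dist (FnMap X n f)) :=
  ⟨⟨MultiSensitive.fnMap, MultiSensitive.of_fnMap (one_le_two.trans hn)⟩,
    MultiSensitive.fnMap_of_sfnMap hn⟩

theorem stmt2 (X : Type*) [MetricSpace X] [CompactSpace X] [ConnectedSpace X] [Nontrivial X]
    (n : ℕ) (hn : 2 ≤ n) (f : X → X) (hf : Continuous f) :
    (MultiSensitive (dist : X → X → ℝ) f ↔ MultiSensitive dist (FnMap X n f)) ∧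
    (MultiSensitive (SFnDist X n) (SFnMap X n f) → MultiSensitive dist (FnMap X n f)) :=
  stmt2_general X n hn f
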